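/- arXiv:2105.12110 — 3 statements merged into one kernel-verified Lean document; each statement's English description precedes it below -/
import Mathlib

section
/- Let F and F̂ be two finite subsets of Z^d (d ≥ 3), and suppose there is a bijection f̂ : F → F̂ such that |f̂(x) - f̂(y)|_∞ ≥ (1/2)|x - y|_∞ for all x, y in F. Then cap(F̂) ≥ cap(F)/c_**, where c_** = sup{ g(0,ŷ)/g(0,y) : y, ŷ ∈ Z^d, |ŷ|_∞ ≥ (1/2)|y|_∞ } is a finite dimension-dependent constant. -/
open scoped Classical
open Filter

noncomputable section

abbrev V (d : ℕ) := Fin d → ℤ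

variable {d : ℕ}

/-- sup-norm of a lattice point. -/
def supNorm (x : V d) : ℕ := Finset.univ.sup fun i => (x i).natAbs

/-- ℓ¹-norm of a lattice point. -/
def l1Norm (x : V d) : ℕ := ∑ i, (x i).natAbs

/-- Euclidean norm of a lattice point. -/
def eNorm (x : V d) : ℝ := Real.sqrt (∑ i, ((x i : ℝ)) ^ 2)

/-- closed sup-norm ball `B(x,r)` as a `Finset`. -/
def ball (x : V d) (r : ℤ) : Finset (V d) := Fintype.piFinset fun i => Finset.Icc (x i - r) (x i + r)

/-- box of side `L` with base point `x`. -/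
def box (x : V d) (L : ℤ) : Finset (V d) := Fintype.piFinset fun i => Finset.Ico (x i) (x i + L)

/-- nearest neighbours of `x` in `ℤ^d`. -/
def nbrs (x : V d) : Finset (V d) :=
  (Finset.univ : Finset (Fin d × Bool)).image
    fun p => Function.update x p.1 (x p.1 + if p.2 then 1 else -1)

/-- `n`-step transition probability of the simple random walk on `ℤ^d`. -/
def step (d : ℕ) : ℕ → V d → V d → ℝ
  | 0, x, y => if x = y then 1 else 0
  | n+1, x, y => ∑ z ∈ nbrs x, (1 / (2 * (d : ℝ))) * step d n z y

/-- Green function of the simple random walk on `ℤ^d` (`d ≥ 3`); for the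
continuous-time walk with unit jump rate it coincides with the expected number of
visits of the discrete-time walk. -/
def green (x y : V d) : ℝ := ∑' n, step d n x y

/-- `n`-step transition probability of the walk killed outside `U`. -/
def stepK (d : ℕ) (U : Set (V d)) : ℕ → V d → V d → ℝ
  | 0, x, y => if x = y ∧ x ∈ U then 1 else 0
  | n+1, x, y => if x ∈ U then ∑ z ∈ nbrs x, (1 / (2 * (d : ℝ))) * stepK d U n z y else 0

/-- Green function of the walk killed outside `U`. -/
def greenK (U : Set (V d)) (x y : V d) : ℝ := ∑' n, stepK d U n x y

/-- probability of entering `F` within `n` steps and before exiting `U`. -/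
def hitBE (F : Finset (V d)) (U : Set (V d)) : ℕ → V d → ℝ
  | 0, x => if x ∈ F then 1 else 0
  | n+1, x => if x ∈ F then 1 else
      if x ∈ U then ∑ z ∈ nbrs x, (1 / (2 * (d : ℝ))) * hitBE F U n z else 0

/-- `P_x[H_F < T_U]`. -/
def hitBeforeExit (F : Finset (V d)) (U : Set (V d)) (x : V d) : ℝ := ⨆ n, hitBE F U n x

/-- `P_x[H_F < ∞]`. -/
def hitProb (F : Finset (V d)) (x : V d) : ℝ := hitBeforeExit F Set.univ x

/-- equilibrium measure `e_A(x) = P_x[H̃_A = ∞] 1_A(x)`. -/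
def eqm (A : Finset (V d)) (x : V d) : ℝ :=
  if x ∈ A then ∑ z ∈ nbrs x, (1 / (2 * (d : ℝ))) * (1 - hitProb A z) else 0

/-- capacity of a finite set. -/
def capa (A : Finset (V d)) : ℝ := ∑ x ∈ A, eqm A x

/-- local density `σ_m(x)` of `U₁` in `B(x, 2^m L₁)`. -/
def dens (U₁ : Set (V d)) (L₁ : ℤ) (m : ℕ) (x : V d) : ℝ :=
  (((ball x (2 ^ m * L₁)).filter (· ∈ U₁)).card : ℝ) / ((ball x (2 ^ m * L₁)).card : ℝ)

/-- average of `f` over `B(x,r)` w.r.t. the normalized counting measure. -/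
def ballAvg (x : V d) (r : ℤ) (f : V d → ℝ) : ℝ :=
  (∑ y ∈ ball x r, f y) / ((ball x r).card : ℝ)

/-- `m_{x,r}`-measure of `{y : P y}`. -/
def frac (x : V d) (r : ℤ) (P : V d → Prop) : ℝ :=
  (((ball x r).filter P).card : ℝ) / ((ball x r).card : ℝ)

/-! The identity `G e_A = h_A` follows from the last-exit decomposition
`P_x[H_A ≤ N] = ∑_{n ≤ N} ∑_{y ∈ A} p_n(x, y) P_y[walk avoids A at times 1, …, N - n]`
by letting `N → ∞` (Tannery's theorem). Hence `G e_F̂ = 1` on `F̂` and `G e_F ≤ 1`.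
By translation invariance and the definition of `c_**`, `g(f̂ x, f̂ y) ≤ c_** g(x, y)`
on `F`, so that
`cap F = ∑ₓ e_F(x) (G e_F̂)(f̂ x) ≤ c_** ∑_y e_F̂(f̂ y) (G e_F)(y) ≤ c_** cap F̂`. -/

lemma mem_nbrs {x z : V d} :
      z ∈ nbrs x ↔
      ∃ i : Fin d, ∃ c : ℤ, (c = 1 ∨ c = -1) ∧ z = Function.update x i (x i + c) := by
  simp only [nbrs, Finset.mem_image, Finset.mem_univ, true_and, Prod.exists]
  constructor
  · rintro ⟨i, b, rfl⟩
    exact ⟨i, if b then 1 else -1, by cases b <;> simp⟩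
  · rintro ⟨i, c, hc | hc, rfl⟩
    · exact ⟨i, true, by simp [hc]⟩
    · exact ⟨i, false, by simp [hc]⟩

lemma nbrs_symm {x z : V d} (h : z ∈ nbrs x) : x ∈ nbrs z := by
  obtain ⟨i, c, hc, rfl⟩ := mem_nbrs.mp h
  refine mem_nbrs.mpr ⟨i, -c, by rcases hc with rfl | rfl <;> simp, ?_⟩
  simp

lemma nbrs_add (x v : V d) : nbrs (x + v) = (nbrs x).image (· + v) := by
  have update_add (i : Fin d) (c : ℤ) :
      Function.update x i (x i + c) + v = Function.update (x + v) i ((x + v) i + c) := by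
    funext j
    by_cases hj : j = i
    · subst hj; simp only [Pi.add_apply, Function.update_self]; ring
    · simp [Function.update_of_ne hj]
  ext z
  simp only [Finset.mem_image, mem_nbrs]
  constructor
  · rintro ⟨i, c, hc, rfl⟩
    exact ⟨_, ⟨i, c, hc, rfl⟩, update_add i c⟩
  · rintro ⟨_, ⟨i, c, hc, rfl⟩, rfl⟩
    exact ⟨i, c, hc, update_add i c⟩

lemma card_nbrs (x : V d) : (nbrs x).card = 2 * d := by
  have hinj : Set.InjOn
      (fun p : Fin d × Bool => Function.update x p.1 (x p.1 + if p.2 then 1 else -1))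
      Set.univ := by
    rintro ⟨i, b⟩ - ⟨j, c⟩ - h
    have hi := congrFun h i
    by_cases hij : i = j
    · subst hij
      cases b <;> cases c <;> simp_all
    · simp only [Function.update_self, Function.update_of_ne hij] at hi
      cases b <;> simp at hi
  rw [nbrs, Finset.card_image_of_injOn (by simpa using hinj)]
  simp [Finset.card_univ, Nat.mul_comm]

lemma sum_nbrs_jump_eq_one (hd : d ≠ 0) (x : V d) :
    ∑ _z ∈ nbrs x, 1 / (2 * (d : ℝ)) = 1 := by
  rw [Finset.sum_const, card_nbrs, nsmul_eq_mul]
  push_cast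
  field_simp

lemma sum_nbrs_jump_mul_le_one (hd : d ≠ 0) (x : V d) {g : V d → ℝ} (hg : ∀ z, g z ≤ 1) :
    ∑ z ∈ nbrs x, 1 / (2 * (d : ℝ)) * g z ≤ 1 :=
  calc ∑ z ∈ nbrs x, 1 / (2 * (d : ℝ)) * g z
      ≤ ∑ _z ∈ nbrs x, 1 / (2 * (d : ℝ)) := by
        gcongr with z
        exact mul_le_of_le_one_right (by positivity) (hg z)
    _ = 1 := sum_nbrs_jump_eq_one hd x

lemma step_nonneg (n : ℕ) (x y : V d) : 0 ≤ step d n x y := by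
  induction n generalizing x with
  | zero => unfold step; positivity
  | succ n ih => exact Finset.sum_nonneg fun z _ => mul_nonneg (by positivity) (ih z)

lemma step_succ_right (n : ℕ) (x y : V d) :
    step d (n + 1) x y = ∑ z ∈ nbrs y, 1 / (2 * (d : ℝ)) * step d n x z := by
  induction n generalizing x y with
  | zero =>
    simp only [step, mul_ite, mul_one, mul_zero, Finset.sum_ite_eq', Finset.sum_ite_eq]
    exact if_congr ⟨nbrs_symm, nbrs_symm⟩ rfl rfl
  | succ n ih =>
    calc step d (n + 2) x y = ∑ z ∈ nbrs x, 1 / (2 * (d : ℝ)) * step d (n + 1) z y := rfl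
      _ = ∑ z ∈ nbrs x, ∑ w ∈ nbrs y,
            1 / (2 * (d : ℝ)) * (1 / (2 * (d : ℝ)) * step d n z w) := by
          simp only [ih, Finset.mul_sum]
      _ = ∑ w ∈ nbrs y, 1 / (2 * (d : ℝ)) * step d (n + 1) x w := by
          rw [Finset.sum_comm]
          simp only [step, Finset.mul_sum]

lemma step_symm (n : ℕ) (x y : V d) : step d n x y = step d n y x := by
  induction n generalizing x y with
  | zero => simp [step, eq_comm]
  | succ n ih =>
    rw [step_succ_right]
    exact Finset.sum_congr rfl fun z _ => by rw [ih]

lemma step_add_add (n : ℕ) (x y v : V d) : step d n (x + v) (y + v) = step d n x y := by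
  induction n generalizing x with
  | zero => simp [step]
  | succ n ih =>
    rw [step, step, nbrs_add, Finset.sum_image fun a _ b _ => (add_left_injective v ·)]
    exact Finset.sum_congr rfl fun z _ => by rw [ih]

lemma step_eq_step_zero_sub (n : ℕ) (x y : V d) : step d n x y = step d n 0 (y - x) := by
  simpa using step_add_add n 0 (y - x) x

lemma step_mul_step_le (m n : ℕ) (x y z : V d) :
    step d m x y * step d n y z ≤ step d (m + n) x z := by
  induction m generalizing x with
  | zero =>
    by_cases h : x = y
    · simp [step, h]
    · simp [step, h, step_nonneg]
  | succ m ih =>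
    rw [show m + 1 + n = m + n + 1 by omega, step, step, Finset.sum_mul]
    refine Finset.sum_le_sum fun w _ => ?_
    rw [mul_assoc]
    exact mul_le_mul_of_nonneg_left (ih w) (by positivity)

def reachable (d : ℕ) : AddSubgroup (V d) where
  carrier := {v | ∃ n, 0 < step d n 0 v}
  zero_mem' := ⟨0, by simp [step]⟩
  add_mem' := by
    rintro a b ⟨m, hm⟩ ⟨n, hn⟩
    refine ⟨m + n, lt_of_lt_of_le ?_ (step_mul_step_le m n 0 a (a + b))⟩
    rw [show step d n a (a + b) = step d n 0 b by simpa [add_comm] using step_add_add n 0 b a]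
    exact mul_pos hm hn
  neg_mem' := by
    rintro a ⟨n, hn⟩
    refine ⟨n, ?_⟩
    rwa [step_symm, ← step_add_add n _ _ a, neg_add_cancel, zero_add]

lemma reachable_eq_top (hd : d ≠ 0) : reachable d = ⊤ := by
  have single_mem (i : Fin d) : Pi.single i 1 ∈ reachable d := by
    have hnbr : Pi.single i 1 ∈ nbrs (0 : V d) :=
      mem_nbrs.mpr ⟨i, 1, by simp, by simp [Pi.single]⟩
    refine ⟨1, lt_of_lt_of_le ?_ (Finset.single_le_sum
      (fun z _ => mul_nonneg (by positivity) (step_nonneg 0 z _)) hnbr)⟩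
    rw [step, if_pos rfl, mul_one]
    exact one_div_pos.mpr (mul_pos two_pos (by exact_mod_cast Nat.pos_of_ne_zero hd))
  refine (AddSubgroup.eq_top_iff' _).mpr fun v => ?_
  rw [← Finset.univ_sum_single v]
  refine AddSubgroup.sum_mem _ fun i _ => ?_
  simpa [← Pi.single_smul'] using zsmul_mem (single_mem i) (v i)

lemma exists_step_pos (hd : d ≠ 0) (x y : V d) : ∃ n, 0 < step d n x y := by
  obtain ⟨n, hn⟩ : y - x ∈ reachable d := by simp [reachable_eq_top hd]
  exact ⟨n, by rwa [step_eq_step_zero_sub]⟩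

lemma summable_step_of_summable (hd : d ≠ 0) {x y x' y' : V d}
    (h : Summable fun n => step d n x' y') : Summable fun n => step d n x y := by
  obtain ⟨a, ha⟩ := exists_step_pos hd x' x
  obtain ⟨b, hb⟩ := exists_step_pos hd y y'
  have hsub : Summable fun n => step d (a + n + b) x' y' :=
    h.comp_injective fun m n hmn => by simpa using hmn
  refine Summable.of_nonneg_of_le (fun n => step_nonneg n x y) (fun n => ?_)
    (hsub.mul_left (step d a x' x * step d b y y')⁻¹)
  rw [inv_mul_eq_div, le_div_iff₀ (by positivity)]
  calc step d n x y * (step d a x' x * step d b y y')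
      = step d a x' x * step d n x y * step d b y y' := by ring
    _ ≤ step d (a + n) x' y * step d b y y' :=
        mul_le_mul_of_nonneg_right (step_mul_step_le a n x' x y) (step_nonneg b y y')
    _ ≤ step d (a + n + b) x' y' := step_mul_step_le (a + n) b x' y y'

lemma green_symm (x y : V d) : green x y = green y x :=
  tsum_congr fun n => step_symm n x y

lemma green_eq_green_zero_sub (x y : V d) : green x y = green 0 (y - x) :=
  tsum_congr fun n => step_eq_step_zero_sub n x y

lemma green_pos (hd : d ≠ 0) {x y : V d} (hs : Summable fun n => step d n x y) :
    0 < green x y := by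
  obtain ⟨n, hn⟩ := exists_step_pos hd x y
  exact hn.trans_le (hs.le_tsum n fun m _ => step_nonneg m x y)

lemma hitBE_nonneg (A : Finset (V d)) (U : Set (V d)) (n : ℕ) (x : V d) :
    0 ≤ hitBE A U n x := by
  induction n generalizing x with
  | zero => unfold hitBE; positivity
  | succ n ih =>
    unfold hitBE
    split_ifs
    exacts [zero_le_one, Finset.sum_nonneg fun z _ => mul_nonneg (by positivity) (ih z), le_rfl]

lemma hitBE_le_one (hd : d ≠ 0) (A : Finset (V d)) (U : Set (V d)) (n : ℕ) (x : V d) :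
    hitBE A U n x ≤ 1 := by
  induction n generalizing x with
  | zero => unfold hitBE; split_ifs <;> norm_num
  | succ n ih =>
    unfold hitBE
    split_ifs
    exacts [le_rfl, sum_nbrs_jump_mul_le_one hd x ih, zero_le_one]

lemma hitBE_monotone (A : Finset (V d)) (U : Set (V d)) (x : V d) :
    Monotone fun n => hitBE A U n x := by
  refine monotone_nat_of_le_succ fun n => ?_
  induction n generalizing x with
  | zero =>
    simp only [hitBE]
    split_ifs
    exacts [le_rfl, Finset.sum_nonneg fun z _ =>
      mul_nonneg (by positivity) (hitBE_nonneg A U 0 z), le_rfl]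
  | succ n ih =>
    rw [hitBE, hitBE]
    split_ifs
    exacts [le_rfl, Finset.sum_le_sum fun z _ => by gcongr; exact ih z, le_rfl]

lemma hitBE_of_mem (A : Finset (V d)) (U : Set (V d)) (n : ℕ) {x : V d} (hx : x ∈ A) :
    hitBE A U n x = 1 := by
  cases n <;> simp [hitBE, hx]

lemma tendsto_hitBE (hd : d ≠ 0) (A : Finset (V d)) (U : Set (V d)) (x : V d) :
    Tendsto (fun n => hitBE A U n x) atTop (nhds (hitBeforeExit A U x)) :=
  tendsto_atTop_ciSup (hitBE_monotone A U x)
    ⟨1, by rintro _ ⟨n, rfl⟩; exact hitBE_le_one hd A U n x⟩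

lemma hitProb_le_one (hd : d ≠ 0) (A : Finset (V d)) (x : V d) : hitProb A x ≤ 1 :=
  ciSup_le fun n => hitBE_le_one hd A Set.univ n x

lemma hitProb_of_mem (A : Finset (V d)) {x : V d} (hx : x ∈ A) : hitProb A x = 1 := by
  simp [hitProb, hitBeforeExit, hitBE_of_mem A _ _ hx]

/-- `avoidProb A m y` is the probability that the walk from `y` avoids `A` at times `1, …, m`. -/
def avoidProb (A : Finset (V d)) : ℕ → V d → ℝ
  | 0, _ => 1
  | m + 1, y => ∑ z ∈ nbrs y, 1 / (2 * (d : ℝ)) * (1 - hitBE A Set.univ m z)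

lemma avoidProb_nonneg (hd : d ≠ 0) (A : Finset (V d)) (m : ℕ) (y : V d) :
    0 ≤ avoidProb A m y := by
  cases m with
  | zero => simp [avoidProb]
  | succ m =>
    exact Finset.sum_nonneg fun z _ =>
      mul_nonneg (by positivity) (sub_nonneg.mpr (hitBE_le_one hd A _ m z))

lemma avoidProb_le_one (hd : d ≠ 0) (A : Finset (V d)) (m : ℕ) (y : V d) :
    avoidProb A m y ≤ 1 := by
  cases m with
  | zero => simp [avoidProb]
  | succ m =>
    exact sum_nbrs_jump_mul_le_one hd y fun z => sub_le_self _ (hitBE_nonneg A _ m z)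

lemma tendsto_avoidProb (hd : d ≠ 0) (A : Finset (V d)) {y : V d} (hy : y ∈ A) :
    Tendsto (fun m => avoidProb A m y) atTop (nhds (eqm A y)) := by
  rw [← Filter.tendsto_add_atTop_iff_nat 1, eqm, if_pos hy]
  exact tendsto_finsetSum _ fun z _ =>
    (tendsto_const_nhds.sub (tendsto_hitBE hd A Set.univ z)).const_mul _

lemma eqm_nonneg (hd : d ≠ 0) (A : Finset (V d)) (y : V d) : 0 ≤ eqm A y := by
  by_cases hy : y ∈ A
  · exact ge_of_tendsto' (tendsto_avoidProb hd A hy) fun m => avoidProb_nonneg hd A m y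
  · simp [eqm, hy]

lemma capa_nonneg (hd : d ≠ 0) (A : Finset (V d)) : 0 ≤ capa A :=
  Finset.sum_nonneg fun x _ => eqm_nonneg hd A x

lemma sum_step_zero_mul (A : Finset (V d)) (g : V d → ℝ) (x : V d) :
    ∑ y ∈ A, step d 0 x y * g y = if x ∈ A then g x else 0 := by
  simp [step, Finset.sum_ite_eq]

lemma sum_step_succ_mul (A : Finset (V d)) (g : V d → ℝ) (n : ℕ) (x : V d) :
    ∑ y ∈ A, step d (n + 1) x y * g y
      = ∑ z ∈ nbrs x, 1 / (2 * (d : ℝ)) * ∑ y ∈ A, step d n z y * g y := by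
  simp only [step, Finset.sum_mul, Finset.mul_sum]
  rw [Finset.sum_comm]
  exact Finset.sum_congr rfl fun _ _ => Finset.sum_congr rfl fun _ _ => by ring

theorem hitBE_univ_eq_sum_step_mul_avoidProb (hd : d ≠ 0) (A : Finset (V d)) (N : ℕ)
    (x : V d) :
    hitBE A Set.univ N x
      = ∑ n ∈ Finset.range (N + 1), ∑ y ∈ A, step d n x y * avoidProb A (N - n) y := by
  induction N generalizing x with
  | zero => simp [hitBE, avoidProb, step, Finset.sum_ite_eq]
  | succ N ih =>
    rw [Finset.sum_range_succ', sum_step_zero_mul]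
    simp only [sum_step_succ_mul, Nat.add_sub_add_right]
    rw [Finset.sum_comm]
    simp only [← Finset.mul_sum, ← ih, Nat.sub_zero]
    rw [hitBE]
    by_cases hx : x ∈ A
    · rw [if_pos hx, if_pos hx, avoidProb, Finset.mul_sum]
      simp only [mul_sub, mul_one, Finset.sum_sub_distrib, sum_nbrs_jump_eq_one hd x]
      ring
    · rw [if_neg hx, if_neg hx, if_pos (Set.mem_univ x), add_zero, Finset.mul_sum]

theorem sum_green_mul_eqm (hd : d ≠ 0) (A : Finset (V d)) {x : V d}
    (hs : ∀ y, Summable fun n => step d n x y) :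
    ∑ y ∈ A, green x y * eqm A y = hitProb A x := by
  set f : ℕ → ℕ → ℝ := fun N n =>
    if n ≤ N then ∑ y ∈ A, step d n x y * avoidProb A (N - n) y else 0
  have hf : ∀ N, hitBE A Set.univ N x = ∑' n, f N n := fun N => by
    rw [tsum_eq_sum (s := Finset.range (N + 1)) fun n hn => if_neg (by simpa using hn),
      hitBE_univ_eq_sum_step_mul_avoidProb hd]
    exact Finset.sum_congr rfl fun n hn => (if_pos (by simpa [Nat.lt_succ_iff] using hn)).symm
  have hlim : Tendsto (fun N => ∑' n, f N n) atTop
      (nhds (∑' n, ∑ y ∈ A, step d n x y * eqm A y)) := by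
    refine tendsto_tsum_of_dominated_convergence (bound := fun n => ∑ y ∈ A, step d n x y)
      (summable_sum fun y _ => hs y) (fun n => ?_) (Eventually.of_forall fun N n => ?_)
    · refine Tendsto.congr' (f₁ := fun N => ∑ y ∈ A, step d n x y * avoidProb A (N - n) y)
        ((eventually_ge_atTop n).mono fun N hN => (if_pos hN).symm) ?_
      exact tendsto_finsetSum _ fun y hy => ((tendsto_avoidProb hd A hy).comp
        (tendsto_sub_atTop_nat n)).const_mul _
    · simp only [f]
      split_ifs
      · rw [Real.norm_of_nonneg (Finset.sum_nonneg fun y _ =>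
          mul_nonneg (step_nonneg n x y) (avoidProb_nonneg hd A _ y))]
        exact Finset.sum_le_sum fun y _ =>
          mul_le_of_le_one_right (step_nonneg n x y) (avoidProb_le_one hd A _ y)
      · simpa using Finset.sum_nonneg fun y _ => step_nonneg n x y
  have hlim' : Tendsto (fun N => ∑' n, f N n) atTop (nhds (hitProb A x)) := by
    simp only [← hf]
    exact tendsto_hitBE hd A Set.univ x
  rw [tendsto_nhds_unique hlim' hlim,
    Summable.tsum_finsetSum fun y _ => (hs y).mul_right _]
  exact Finset.sum_congr rfl fun y _ => (tsum_mul_right).symm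

theorem capa_le_mul_capa_of_green_le (hd : d ≠ 0)
    (hs : ∀ x y : V d, Summable fun n => step d n x y)
    {c : ℝ} (hc : 0 ≤ c) {F Fh : Finset (V d)} {f : V d → V d} (hbij : Set.BijOn f F Fh)
    (hg : ∀ x ∈ F, ∀ y ∈ F, green (f x) (f y) ≤ c * green x y) :
    capa F ≤ c * capa Fh := by
  have reindex (g : V d → ℝ) : ∑ y ∈ F, g (f y) = ∑ y ∈ Fh, g y :=
    Finset.sum_nbij f hbij.mapsTo hbij.injOn hbij.surjOn fun _ _ => rfl
  have he := eqm_nonneg hd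
  calc capa F = ∑ x ∈ F, eqm F x * ∑ y ∈ F, green (f x) (f y) * eqm Fh (f y) := by
        refine Finset.sum_congr rfl fun x hx => ?_
        rw [reindex fun y => green (f x) y * eqm Fh y, sum_green_mul_eqm hd Fh (hs _),
          hitProb_of_mem Fh (hbij.mapsTo hx), mul_one]
    _ ≤ ∑ x ∈ F, eqm F x * ∑ y ∈ F, c * green x y * eqm Fh (f y) := by
        gcongr with x hx y hy
        · exact he _ _
        · exact he _ _
        · exact hg x hx y hy
    _ = c * ∑ y ∈ F, eqm Fh (f y) * ∑ x ∈ F, green y x * eqm F x := by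
        simp only [Finset.mul_sum]
        rw [Finset.sum_comm]
        exact Finset.sum_congr rfl fun y _ => Finset.sum_congr rfl fun x _ => by
          rw [green_symm]; ring
    _ ≤ c * ∑ y ∈ F, eqm Fh (f y) := by
        gcongr with y
        rw [sum_green_mul_eqm hd F (hs y)]
        exact mul_le_of_le_one_right (he _ _) (hitProb_le_one hd F y)
    _ = c * capa Fh := by rw [reindex]; rfl

/-- Lemma 4.3: if `f` maps `F` bijectively onto `F̂` contracting
sup-norm distances by at most a factor `1/2`, then `cap(F̂) ≥ cap(F)/c_**`, where
`c_** = sup { g(0,ŷ)/g(0,y) : |ŷ|_∞ ≥ |y|_∞/2 }`. -/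
theorem cost_bubble_stmt0 (d : ℕ) (hd : 3 ≤ d)
    (cstar : ℝ)
    (hcstar : IsLUB {r : ℝ | ∃ y yh : V d,
        (1 / 2 : ℝ) * (supNorm y : ℝ) ≤ (supNorm yh : ℝ) ∧ r = green 0 yh / green 0 y} cstar)
    (F Fh : Finset (V d)) (f : V d → V d)
    (hbij : Set.BijOn f (↑F) (↑Fh))
    (hcontr : ∀ x ∈ F, ∀ y ∈ F,
      (1 / 2 : ℝ) * (supNorm (x - y) : ℝ) ≤ (supNorm (f x - f y) : ℝ)) :
    capa F / cstar ≤ capa Fh := by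
  have hd0 : d ≠ 0 := by omega
  have hsup0 : (supNorm (0 : V d) : ℝ) = 0 := by simp [supNorm]
  by_cases hs : ∀ x y : V d, Summable fun n => step d n x y
  · have hpos (x y : V d) : 0 < green x y := green_pos hd0 (hs x y)
    have hc1 : 1 ≤ cstar := hcstar.1 ⟨0, 0, by simp [hsup0], (div_self (hpos 0 0).ne').symm⟩
    have hg : ∀ x ∈ F, ∀ y ∈ F, green (f x) (f y) ≤ cstar * green x y := by
      intro x hx y hy
      rw [green_eq_green_zero_sub, green_eq_green_zero_sub x, ← div_le_iff₀ (hpos 0 _)]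
      exact hcstar.1 ⟨y - x, f y - f x, hcontr y hy x hx, rfl⟩
    rw [div_le_iff₀ (by linarith), mul_comm]
    exact capa_le_mul_capa_of_green_le hd0 hs (by linarith) hbij hg
  · -- For `d ≥ 3` the walk is transient and this case does not occur; here `green` is
    -- identically `0`, the junk value of divergent sums.
    simp only [not_forall] at hs
    obtain ⟨x₀, y₀, hxy⟩ := hs
    have hg (x y : V d) : green x y = 0 :=
      tsum_eq_zero_of_not_summable fun h => hxy (summable_step_of_summable hd0 h)
    have hc : cstar ≤ 0 := hcstar.2 (by rintro r ⟨y, yh, -, rfl⟩; simp [hg])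
    exact (div_nonpos_of_nonneg_of_nonpos (capa_nonneg hd0 F) hc).trans (capa_nonneg hd0 Fh)
end
end

section
/- With the notation of the density functions σ_m as above, for all integers 0 ≤ m' < m and all x ∈ Z^d one has |σ_m(x) - ⟨σ_{m'}⟩_{B(x, 2^m L_1)}| ≤ d · 2^{d-1} · 2^{m' - m}, where ⟨f⟩_{B(x,r)} denotes the average of f over B(x,r) ∩ Z^d. -/
set_option maxHeartbeats 1000000


open scoped Classical
open Filter

noncomputable section

variable {d : ℕ}

section Aux

lemma mem_ball_iff' {d : ℕ} {x y : V d} {r : ℤ} :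
    y ∈ ball x r ↔ ∀ i, x i - r ≤ y i ∧ y i ≤ x i + r := by
  simp [ball, Fintype.mem_piFinset, Finset.mem_Icc]

lemma ball_symm' {d : ℕ} {x y : V d} {r : ℤ} : y ∈ ball x r ↔ x ∈ ball y r := by
  simp only [mem_ball_iff']
  constructor <;> (intro h i; have := h i; omega)

lemma ball_triangle' {d : ℕ} {x y z : V d} {s t : ℤ} (hy : y ∈ ball x s) (hz : z ∈ ball y t) :
    z ∈ ball x (s + t) := by
  simp only [mem_ball_iff'] at *
  intro i; have := hy i; have := hz i; omega

lemma ball_mono' {d : ℕ} {x : V d} {r₁ r₂ : ℤ} (h : r₁ ≤ r₂) : ball x r₁ ⊆ ball x r₂ := by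
  intro y hy; simp only [mem_ball_iff'] at *
  intro i; have := hy i; omega

lemma card_ball' {d : ℕ} (x : V d) {r : ℤ} (hr : 0 ≤ r) :
    ((ball x r).card : ℝ) = (2 * (r : ℝ) + 1) ^ d := by
  have h1 : (ball x r).card = ((2 * r + 1).toNat) ^ d := by
    rw [ball, Fintype.card_piFinset]
    have : ∀ i : Fin d, (Finset.Icc (x i - r) (x i + r)).card = (2 * r + 1).toNat := by
      intro i; rw [Int.card_Icc]; congr 1; ring
    rw [Finset.prod_congr rfl (fun i _ => this i), Finset.prod_const, Finset.card_univ,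
      Fintype.card_fin]
  rw [h1]
  have h2 : (((2 * r + 1).toNat : ℕ) : ℝ) = 2 * (r : ℝ) + 1 := by
    rw [show (((2 * r + 1).toNat : ℕ) : ℝ) = ((((2 * r + 1).toNat : ℕ) : ℤ) : ℝ) by push_cast; ring,
      Int.toNat_of_nonneg (by omega)]
    push_cast; ring
  push_cast
  rw [h2]

lemma pow_sub_pow_le' {x y : ℝ} (hy : 0 ≤ y) (hxy : y ≤ x) :
    ∀ n : ℕ, x ^ (n + 1) - y ^ (n + 1) ≤ (n + 1) * (x - y) * x ^ n
  | 0 => by simp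
  | n + 1 => by
    have ih := pow_sub_pow_le' hy hxy n
    have hx : (0:ℝ) ≤ x := hy.trans hxy
    have h1 : y ^ (n + 1) ≤ x ^ (n + 1) := pow_le_pow_left₀ hy hxy _
    have hA : x * (x ^ (n + 1) - y ^ (n + 1)) ≤ x * ((n + 1) * (x - y) * x ^ n) :=
      mul_le_mul_of_nonneg_left ih hx
    have hB : (x - y) * y ^ (n + 1) ≤ (x - y) * x ^ (n + 1) :=
      mul_le_mul_of_nonneg_left h1 (by linarith)
    calc x ^ (n + 2) - y ^ (n + 2)
        = x * (x ^ (n + 1) - y ^ (n + 1)) + (x - y) * y ^ (n + 1) := by ring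
      _ ≤ x * ((n + 1) * (x - y) * x ^ n) + (x - y) * x ^ (n + 1) := add_le_add hA hB
      _ = ((n:ℝ) + 1 + 1) * (x - y) * x ^ (n + 1) := by ring
      _ = ((n + 1 : ℕ) + 1) * (x - y) * x ^ (n + 1) := by push_cast; ring

end Aux

/-- Lemma A.1, (A.9): for `0 ≤ m' < m`,
`|σ_m(x) - ⟨σ_{m'}⟩_{B(x,2^m L₁)}| ≤ d · 2^{d-1} · 2^{m'-m}`. -/
theorem cost_bubble_stmt3 (d : ℕ) (hd : 3 ≤ d) (L₁ : ℤ) (hL₁ : 1 ≤ L₁)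
    (U₁ : Set (V d)) (m' m : ℕ) (hm : m' < m) (x : V d) :
    |dens U₁ L₁ m x - ballAvg x (2 ^ m * L₁) (dens U₁ L₁ m')| ≤
      (d : ℝ) * 2 ^ (d - 1) * ((2 : ℝ) ^ m' / (2 : ℝ) ^ m) := by
  classical
  obtain ⟨k, hk⟩ : ∃ k, d = k + 1 := ⟨d - 1, by omega⟩
  have hk2 : 2 ≤ k := by omega
  have hL₁' : (0:ℤ) < L₁ := hL₁
  set r' : ℤ := 2 ^ m' * L₁ with hr'def
  set r : ℤ := 2 ^ m * L₁ with hrdef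
  have hr'pos : 0 < r' := by positivity
  have h2r' : 2 * r' ≤ r := by
    have h2 : (2:ℤ) ^ (m' + 1) ≤ 2 ^ m := pow_le_pow_right₀ (by norm_num) hm
    calc 2 * r' = 2 ^ (m' + 1) * L₁ := by rw [hr'def]; ring
      _ ≤ 2 ^ m * L₁ := mul_le_mul_of_nonneg_right h2 (le_of_lt hL₁')
  have hrpos : 0 < r := by linarith
  have hr'r : r' ≤ r := by linarith
  -- real abbreviations
  set A : ℝ := 2 * (r:ℝ) + 1 with hAdef
  set E : ℝ := 2 * (r':ℝ) with hEdef
  have hrR : (0:ℝ) < (r:ℝ) := by exact_mod_cast hrpos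
  have hr'R : (0:ℝ) < (r':ℝ) := by exact_mod_cast hr'pos
  have h2r'R : 2 * (r':ℝ) ≤ (r:ℝ) := by exact_mod_cast h2r'
  have hApos : (0:ℝ) < A := by rw [hAdef]; linarith
  have hEpos : (0:ℝ) < E := by rw [hEdef]; linarith
  have hEA : E ≤ A := by rw [hAdef, hEdef]; linarith
  set C : ℝ := (2 * (r':ℝ) + 1) ^ d with hCdef
  have hCpos : (0:ℝ) < C := by
    rw [hCdef]; apply pow_pos; nlinarith [hEpos]
  have hBcard : ((ball x r).card : ℝ) = A ^ d := card_ball' x hrpos.le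
  have hballcard : ∀ y : V d, ((ball y r').card : ℝ) = C := fun y => card_ball' y hr'pos.le
  set T : Finset (V d) := (ball x (r + r')).filter (· ∈ U₁) with hTdef
  set w : V d → ℕ := fun z => (ball z r' ∩ ball x r).card with hwdef
  -- double counting
  have hswap : ∑ y ∈ ball x r, ((ball y r').filter (· ∈ U₁)).card = ∑ z ∈ T, w z := by
    have h : ∀ (y z : V d),
        y ∈ ball x r ∧ z ∈ (ball y r').filter (· ∈ U₁) ↔
        y ∈ (ball z r' ∩ ball x r) ∧ z ∈ T := by
      intro y z
      simp only [Finset.mem_filter, Finset.mem_inter, hTdef]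
      constructor
      · rintro ⟨hy, hz, hU⟩
        exact ⟨⟨ball_symm'.mp hz, hy⟩, ball_triangle' hy hz, hU⟩
      · rintro ⟨⟨hz, hy⟩, _, hU⟩
        exact ⟨hy, ball_symm'.mp hz, hU⟩
    simp only [Finset.card_eq_sum_ones, hwdef]
    exact Finset.sum_comm' h
  -- dens at scale m as a sum over T
  have hfilter_eq : (ball x r).filter (· ∈ U₁) = T.filter (· ∈ ball x r) := by
    ext z
    simp only [Finset.mem_filter, hTdef]
    constructor
    · rintro ⟨hz, hU⟩
      exact ⟨⟨ball_mono' (by linarith) hz, hU⟩, hz⟩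
    · rintro ⟨⟨_, hU⟩, hz⟩
      exact ⟨hz, hU⟩
  have hdens : dens U₁ L₁ m x
      = (∑ z ∈ T, (if z ∈ ball x r then (1:ℝ) else 0)) / ((ball x r).card : ℝ) := by
    rw [dens, Finset.sum_boole, hfilter_eq]
  have havg : ballAvg x r (dens U₁ L₁ m')
      = ((∑ z ∈ T, (w z : ℝ)) / C) / ((ball x r).card : ℝ) := by
    rw [ballAvg]
    congr 1
    have h1 : ∀ y ∈ ball x r, dens U₁ L₁ m' y = (((ball y r').filter (· ∈ U₁)).card : ℝ) / C := by
      intro y _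
      rw [dens, hballcard y]
    rw [Finset.sum_congr rfl h1, ← Finset.sum_div]
    congr 1
    exact_mod_cast congrArg (Nat.cast : ℕ → ℝ) hswap
  set g : V d → ℝ := fun z => (if z ∈ ball x r then (1:ℝ) else 0) - (w z : ℝ) / C with hgdef
  have hdiff : dens U₁ L₁ m x - ballAvg x (2 ^ m * L₁) (dens U₁ L₁ m')
      = (∑ z ∈ T, g z) / ((ball x r).card : ℝ) := by
    rw [show (2:ℤ) ^ m * L₁ = r from rfl, hdens, havg, div_sub_div_same]
    congr 1
    rw [hgdef, Finset.sum_sub_distrib, ← Finset.sum_div]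
  -- pointwise bounds on g
  have hwleC : ∀ z : V d, (w z : ℝ) ≤ C := by
    intro z
    rw [← hballcard z]
    exact_mod_cast Finset.card_le_card (Finset.inter_subset_left)
  have hwnonneg : ∀ z : V d, (0:ℝ) ≤ (w z : ℝ) / C := fun z => by positivity
  have hinner : ∀ z : V d, z ∈ ball x (r - r') → (w z : ℝ) = C := by
    intro z hz
    have hsub : ball z r' ⊆ ball x r := by
      intro y hy
      have := ball_triangle' hz hy
      rwa [sub_add_cancel] at this
    rw [hwdef]
    simp only
    rw [Finset.inter_eq_left.mpr hsub, hballcard z]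
  have hg_le : ∀ z ∈ T, g z ≤ (if z ∈ ball x r \ ball x (r - r') then (1:ℝ) else 0) := by
    intro z _
    rw [hgdef]
    simp only
    by_cases h1 : z ∈ ball x (r - r')
    · have h2 : z ∈ ball x r := ball_mono' (by linarith) h1
      rw [hinner z h1, div_self hCpos.ne', if_pos h2, if_neg (by simp [Finset.mem_sdiff, h1])]
      simp
    · by_cases h2 : z ∈ ball x r
      · rw [if_pos h2, if_pos (Finset.mem_sdiff.mpr ⟨h2, h1⟩)]
        have := hwnonneg z
        linarith
      · rw [if_neg h2, if_neg (by simp [Finset.mem_sdiff, h2])]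
        have := hwnonneg z
        linarith
  have hg_ge : ∀ z ∈ T, -(if z ∈ ball x (r + r') \ ball x r then (1:ℝ) else 0) ≤ g z := by
    intro z hz
    have hzT : z ∈ ball x (r + r') := (Finset.mem_filter.mp hz).1
    rw [hgdef]
    simp only
    by_cases h2 : z ∈ ball x r
    · rw [if_pos h2, if_neg (by simp [Finset.mem_sdiff, h2])]
      have h3 : (w z : ℝ) / C ≤ 1 := by
        rw [div_le_one hCpos]; exact hwleC z
      linarith
    · rw [if_neg h2, if_pos (Finset.mem_sdiff.mpr ⟨hzT, h2⟩)]
      have h3 : (w z : ℝ) / C ≤ 1 := by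
        rw [div_le_one hCpos]; exact hwleC z
      linarith
  -- annulus cardinalities
  have hcard_inner : ((ball x r \ ball x (r - r')).card : ℝ) = A ^ d - (A - E) ^ d := by
    rw [Finset.card_sdiff_of_subset (ball_mono' (by linarith))]
    have hle := Finset.card_le_card (ball_mono' (show r - r' ≤ r by linarith) (x := x))
    rw [Nat.cast_sub hle, hBcard, card_ball' x (by omega : (0:ℤ) ≤ r - r')]
    congr 1
    push_cast [hAdef, hEdef]
    ring
  have hcard_outer : ((ball x (r + r') \ ball x r).card : ℝ) = (A + E) ^ d - A ^ d := by
    rw [Finset.card_sdiff_of_subset (ball_mono' (by linarith))]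
    have hle := Finset.card_le_card (ball_mono' (show r ≤ r + r' by linarith) (x := x))
    rw [Nat.cast_sub hle, hBcard, card_ball' x (by omega : (0:ℤ) ≤ r + r')]
    congr 1
    push_cast [hAdef, hEdef]
    ring
  -- sum bounds
  have hsum_le : ∑ z ∈ T, g z ≤ A ^ d - (A - E) ^ d := by
    calc ∑ z ∈ T, g z
        ≤ ∑ z ∈ T, (if z ∈ ball x r \ ball x (r - r') then (1:ℝ) else 0) :=
          Finset.sum_le_sum hg_le
      _ = ((T.filter (· ∈ ball x r \ ball x (r - r'))).card : ℝ) := by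
          rw [Finset.sum_boole]
      _ ≤ ((ball x r \ ball x (r - r')).card : ℝ) := by
          exact_mod_cast Finset.card_le_card (fun z hz => (Finset.mem_filter.mp hz).2)
      _ = A ^ d - (A - E) ^ d := hcard_inner
  have hsum_ge : -((A + E) ^ d - A ^ d) ≤ ∑ z ∈ T, g z := by
    have : -∑ z ∈ T, g z ≤ (A + E) ^ d - A ^ d := by
      calc -∑ z ∈ T, g z = ∑ z ∈ T, -g z := by rw [Finset.sum_neg_distrib]
        _ ≤ ∑ z ∈ T, (if z ∈ ball x (r + r') \ ball x r then (1:ℝ) else 0) :=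
            Finset.sum_le_sum (fun z hz => by have := hg_ge z hz; linarith)
        _ = ((T.filter (· ∈ ball x (r + r') \ ball x r)).card : ℝ) := by
            rw [Finset.sum_boole]
        _ ≤ ((ball x (r + r') \ ball x r).card : ℝ) := by
            exact_mod_cast Finset.card_le_card (fun z hz => (Finset.mem_filter.mp hz).2)
        _ = (A + E) ^ d - A ^ d := hcard_outer
    linarith
  -- numeric bounds
  set q : ℝ := (r' : ℝ) / (r : ℝ) with hqdef
  have hqpos : 0 < q := by rw [hqdef]; positivity
  have hEqA : E ≤ q * A := by
    rw [hqdef, hEdef, hAdef, div_mul_eq_mul_div, le_div_iff₀ hrR]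
    nlinarith
  have hratio : (2:ℝ) ^ m' / (2:ℝ) ^ m = q := by
    rw [hqdef, hr'def, hrdef]
    have hL₁R : (0:ℝ) < (L₁:ℝ) := by exact_mod_cast hL₁'
    push_cast
    rw [div_eq_div_iff (by positivity) (by positivity)]
    ring
  have hAnn : (0:ℝ) ≤ A ^ k := by positivity
  have h2k : (1:ℝ) ≤ 2 ^ k := one_le_pow₀ (by norm_num : (1:ℝ) ≤ 2)
  have hd1 : d - 1 = k := by omega
  -- inner annulus estimate
  have hin1 : A ^ d - (A - E) ^ d ≤ (d:ℝ) * E * A ^ k := by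
    have h1 := pow_sub_pow_le' (show (0:ℝ) ≤ A - E by linarith)
      (show A - E ≤ A by linarith) k
    rw [hk]
    push_cast
    calc A ^ (k+1) - (A - E) ^ (k+1) ≤ ((k:ℝ) + 1) * (A - (A - E)) * A ^ k := by
          exact_mod_cast h1
      _ = ((k:ℝ) + 1) * E * A ^ k := by ring
  -- outer annulus estimate
  have hout1 : (A + E) ^ d - A ^ d ≤ (d:ℝ) * E * (2 ^ k * A ^ k) := by
    have h1 := pow_sub_pow_le' hApos.le (show A ≤ A + E by linarith) k
    have h2 : (A + E) ^ k ≤ (2 * A) ^ k := pow_le_pow_left₀ (by linarith) (by linarith) k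
    rw [hk]
    push_cast
    calc (A + E) ^ (k+1) - A ^ (k+1)
        ≤ ((k:ℝ) + 1) * ((A + E) - A) * (A + E) ^ k := by exact_mod_cast h1
      _ = ((k:ℝ) + 1) * E * (A + E) ^ k := by ring
      _ ≤ ((k:ℝ) + 1) * E * (2 * A) ^ k := by
          apply mul_le_mul_of_nonneg_left h2
          positivity
      _ = ((k:ℝ) + 1) * E * (2 ^ k * A ^ k) := by rw [mul_pow]
  have hE2k : E ≤ 2 ^ k * (q * A) := by
    calc E ≤ q * A := hEqA
      _ ≤ 2 ^ k * (q * A) := le_mul_of_one_le_left (by positivity) h2k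
  have hfin1 : A ^ d - (A - E) ^ d ≤ (d:ℝ) * 2 ^ (d - 1) * q * A ^ d := by
    calc A ^ d - (A - E) ^ d ≤ (d:ℝ) * E * A ^ k := hin1
      _ ≤ (d:ℝ) * (2 ^ k * (q * A)) * A ^ k := by
          apply mul_le_mul_of_nonneg_right _ hAnn
          apply mul_le_mul_of_nonneg_left hE2k (by positivity)
      _ = (d:ℝ) * 2 ^ (d - 1) * q * A ^ d := by rw [hd1, hk]; ring
  have hfin2 : (A + E) ^ d - A ^ d ≤ (d:ℝ) * 2 ^ (d - 1) * q * A ^ d := by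
    calc (A + E) ^ d - A ^ d ≤ (d:ℝ) * E * (2 ^ k * A ^ k) := hout1
      _ ≤ (d:ℝ) * (q * A) * (2 ^ k * A ^ k) := by
          apply mul_le_mul_of_nonneg_right _ (by positivity)
          apply mul_le_mul_of_nonneg_left hEqA (by positivity)
      _ = (d:ℝ) * 2 ^ (d - 1) * q * A ^ d := by rw [hd1, hk]; ring
  rw [hdiff, hratio, hBcard, abs_div, abs_of_pos (pow_pos hApos d),
    div_le_iff₀ (pow_pos hApos d)]
  exact abs_le.mpr ⟨by linarith [hsum_ge, hfin2], by linarith [hsum_le, hfin1]⟩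


end
end

section
/- (Geometric decay of the resonance-avoidance bounds.) Define γ^{(J)}_{k,I} for J ≥ 1, 1 ≤ k ≤ J, I ∈ Z by: γ^{(J)}_{k,I} = 1 for I ≤ 0; γ^{(J)}_{1,I} = 0 for I ≥ 1; and recursively γ^{(J)}_{k+1,I} = (1 - c)^{√I - 1} + I^{1 + (k-1)/2} γ^{(J)}_{k, [√I] - k + 1} for 1 ≤ k < J and I ≥ 1, where c ∈ (0,1) is a constant. Then for each 1 ≤ k ≤ J, limsup_{I → ∞} I^{-1/2^{k-1}} log γ^{(J)}_{k,I} ≤ log(1 - c) < 0. -/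
open Filter

noncomputable section

/-- The recursively defined quantities `γ^{(J)}_{k,I}` of (A.39): here `gam c j I`
corresponds to `γ^{(J)}_{j+1,I}` (the recursion does not depend on `J`).
`gam c 0 I = γ_{1,I}` equals `1` for `I ≤ 0` and `0` for `I ≥ 1`, and
`γ_{k+1,I} = (1-c)^{√I - 1} + I^{1+(k-1)/2} γ_{k, [√I]-k+1}` for `I ≥ 1`. -/
def gam (c : ℝ) : ℕ → ℤ → ℝ
  | 0, I => if I ≤ 0 then 1 else 0
  | j + 1, I => if I ≤ 0 then 1 else
      (1 - c) ^ (Real.sqrt (I : ℝ) - 1) +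
        ((I : ℝ)) ^ ((1 : ℝ) + (j : ℝ) / 2) * gam c j (⌊Real.sqrt (I : ℝ)⌋ - j)

/-! Write `L = log (1 - c) < 0`. By induction on `j`, `gam c j I ≤ exp ((L + ε) I ^ (2⁻ʲ))`
for large `I`. In the recursion, `gam c j` is evaluated at `⌊√I⌋ - j ≈ √I`, which halves the
exponent of `I`; the prefactor `I ^ (1 + j/2)` and the shift by `j` only cost a factor
`exp (O(log I))`, which is absorbed into `ε I ^ (2⁻ʲ⁻¹)`, and the first term
`(1 - c) ^ (√I - 1)` decays faster than needed. -/

open Real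

lemma eventually_le_mul_rpow {t ε : ℝ} (ht : 0 < t) (hε : 0 < ε) (C : ℝ) :
    ∀ᶠ I : ℤ in atTop, C ≤ ε * (I : ℝ) ^ t :=
  tendsto_intCast_atTop_atTop.eventually
    (((tendsto_rpow_atTop ht).const_mul_atTop hε).eventually_ge_atTop C)

lemma eventually_mul_log_add_le_mul_rpow {t ε : ℝ} (ht : 0 < t) (hε : 0 < ε) (a C : ℝ) :
    ∀ᶠ I : ℤ in atTop, a * log I + C ≤ ε * (I : ℝ) ^ t := by
  have hlog : ∀ᶠ x : ℝ in atTop, ‖a * log x‖ ≤ ε / 2 * ‖x ^ t‖ :=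
    ((isLittleO_log_rpow_atTop ht).const_mul_left a).bound (half_pos hε)
  filter_upwards [tendsto_intCast_atTop_atTop.eventually hlog,
    eventually_le_mul_rpow ht (half_pos hε) C, eventually_ge_atTop 0] with I hI hC hI0
  have hpos : (0 : ℝ) ≤ (I : ℝ) ^ t := rpow_nonneg (Int.cast_nonneg hI0) t
  rw [norm_of_nonneg hpos] at hI
  linarith [le_abs_self (a * log I), Real.norm_eq_abs (a * log I)]

lemma rpow_half_sub_le_floor_sqrt_sub_rpow {s x : ℝ} (hs0 : 0 ≤ s) (hs1 : s ≤ 1) (j : ℕ)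
    (hx : ((j : ℝ) + 1) ^ 2 ≤ x) :
    x ^ (s / 2) - ((j : ℝ) + 1) ^ s ≤ (((⌊√x⌋ - j : ℤ)) : ℝ) ^ s := by
  have hgap : 0 ≤ √x - (j + 1) := by
    rw [sub_nonneg]; exact le_sqrt_of_sq_le hx
  have hfloor : √x - (j + 1) ≤ ((⌊√x⌋ - j : ℤ) : ℝ) := by
    push_cast; linarith [Int.sub_one_lt_floor √x]
  have hsqrt : x ^ (s / 2) = (√x - (j + 1) + (j + 1)) ^ s := by
    rw [sub_add_cancel, sqrt_eq_rpow, ← rpow_mul (le_trans (by positivity) hx)]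
    ring_nf
  calc x ^ (s / 2) - ((j : ℝ) + 1) ^ s ≤ (√x - (j + 1)) ^ s := by
        rw [hsqrt, sub_le_iff_le_add]
        exact rpow_add_le_add_rpow hgap (by positivity) hs0 hs1
    _ ≤ _ := rpow_le_rpow hgap hfloor hs0

/-- For `L < 0` this says `limsup I ^ (-t) log (f I) ≤ L`, without requiring `f I > 0`. -/
def HasStretchedExpBound (L t : ℝ) (f : ℤ → ℝ) : Prop :=
  ∀ ε > 0, ∀ᶠ I : ℤ in atTop, f I ≤ exp ((L + ε) * (I : ℝ) ^ t)

namespace HasStretchedExpBound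

variable {L t : ℝ} {f g : ℤ → ℝ}

lemma of_le (hfg : f ≤ᶠ[atTop] g) (hg : HasStretchedExpBound L t g) :
    HasStretchedExpBound L t f :=
  fun ε hε => (hfg.and (hg ε hε)).mono fun _ h => h.1.trans h.2

lemma of_forall_lt {δ : ℝ} (hδ : 0 < δ)
    (h : ∀ ε > 0, ε < δ → ∀ᶠ I : ℤ in atTop, f I ≤ exp ((L + ε) * (I : ℝ) ^ t)) :
    HasStretchedExpBound L t f := by
  intro ε hε
  have hε' : 0 < min ε (δ / 2) := lt_min hε (half_pos hδ)
  filter_upwards [h _ hε' (by linarith [min_le_right ε (δ / 2)]), eventually_ge_atTop 0]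
    with I hI hI0
  refine hI.trans (exp_le_exp.2 (mul_le_mul_of_nonneg_right ?_ ?_))
  · linarith [min_le_left ε (δ / 2)]
  · exact rpow_nonneg (Int.cast_nonneg hI0) t

lemma add (ht : 0 < t) (hf : HasStretchedExpBound L t f) (hg : HasStretchedExpBound L t g) :
    HasStretchedExpBound L t (f + g) := by
  intro ε hε
  filter_upwards [hf _ (half_pos hε), hg _ (half_pos hε),
    eventually_le_mul_rpow ht (half_pos hε) (log 2)] with I hfI hgI hI
  calc f I + g I ≤ exp (log 2 + (L + ε / 2) * (I : ℝ) ^ t) := by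
        rw [exp_add, exp_log two_pos]; linarith
    _ ≤ exp ((L + ε) * (I : ℝ) ^ t) := exp_le_exp.2 (by linarith)

lemma rpow_mul_comp_floor_sqrt_sub {s : ℝ} (hL : L < 0) (hs : 0 < s) (hs1 : s ≤ 1)
    (a : ℝ) (j : ℕ) (hf : HasStretchedExpBound L s f) :
    HasStretchedExpBound L (s / 2) fun I => (I : ℝ) ^ a * f (⌊√(I : ℝ)⌋ - j) := by
  refine of_forall_lt (neg_pos.2 hL) fun ε hε hεL => ?_
  set K := ((j : ℝ) + 1) ^ s
  have hm : Tendsto (fun I : ℤ => ⌊√(I : ℝ)⌋ - j) atTop atTop :=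
    tendsto_atTop_add_const_right _ _
      (tendsto_floor_atTop.comp (tendsto_sqrt_atTop.comp tendsto_intCast_atTop_atTop))
  filter_upwards [hm.eventually (hf _ (half_pos hε)),
    eventually_mul_log_add_le_mul_rpow (half_pos hs) (half_pos hε) a (-(L + ε / 2) * K),
    tendsto_intCast_atTop_atTop.eventually (eventually_ge_atTop (((j : ℝ) + 1) ^ 2))]
    with I hfI hlog hI
  have hx : (0 : ℝ) < I := lt_of_lt_of_le (by positivity) hI
  have hgap := rpow_half_sub_le_floor_sqrt_sub_rpow hs.le hs1 j hI
  calc (I : ℝ) ^ a * f (⌊√(I : ℝ)⌋ - j)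
      ≤ (I : ℝ) ^ a * exp ((L + ε / 2) * ((I : ℝ) ^ (s / 2) - K)) := by
        gcongr
        exact hfI.trans (exp_le_exp.2 (mul_le_mul_of_nonpos_left hgap (by linarith)))
    _ = exp (a * log I + (L + ε / 2) * ((I : ℝ) ^ (s / 2) - K)) := by
        rw [rpow_def_of_pos hx, ← exp_add, mul_comm (log _)]
    _ ≤ exp ((L + ε) * (I : ℝ) ^ (s / 2)) := exp_le_exp.2 (by linarith)

end HasStretchedExpBound

lemma hasStretchedExpBound_exp_mul_sqrt_sub_one {L t : ℝ} (hL : L ≤ 0) (ht : 0 < t)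
    (ht2 : t ≤ 1 / 2) : HasStretchedExpBound L t fun I => exp (L * (√(I : ℝ) - 1)) := by
  intro ε hε
  filter_upwards [eventually_le_mul_rpow ht hε (-L),
    tendsto_intCast_atTop_atTop.eventually (eventually_ge_atTop (1 : ℝ))] with I hC hI
  have hroot : L * √(I : ℝ) ≤ L * (I : ℝ) ^ t := by
    rw [sqrt_eq_rpow]
    exact mul_le_mul_of_nonpos_left (rpow_le_rpow_of_exponent_le hI ht2) hL
  exact exp_le_exp.2 (by linarith)

lemma gam_succ_of_pos (c : ℝ) (j : ℕ) {I : ℤ} (hI : 0 < I) :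
    gam c (j + 1) I = (1 - c) ^ (√(I : ℝ) - 1) +
      (I : ℝ) ^ ((1 : ℝ) + (j : ℝ) / 2) * gam c j (⌊√(I : ℝ)⌋ - j) := by
  rw [gam, if_neg hI.not_ge]

theorem hasStretchedExpBound_gam {c : ℝ} (hc : c ∈ Set.Ioo 0 1) (j : ℕ) :
    HasStretchedExpBound (log (1 - c)) (1 / 2 ^ j) (gam c j) := by
  have h1c : 0 < 1 - c := sub_pos.2 hc.2
  have hL : log (1 - c) < 0 := log_neg h1c (by linarith [hc.1])
  induction j with
  | zero =>
    intro ε _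
    filter_upwards [eventually_gt_atTop 0] with I hI
    simp only [gam, if_neg hI.not_ge]
    positivity
  | succ j ih =>
    have hs : (0 : ℝ) < 1 / 2 ^ j := by positivity
    have hs1 : (1 : ℝ) / 2 ^ j ≤ 1 := div_le_one_of_le₀ (one_le_pow₀ one_le_two) (by positivity)
    have hhalf : (1 : ℝ) / 2 ^ (j + 1) = 1 / 2 ^ j / 2 := by rw [pow_succ]; ring
    refine .of_le (g := (fun I : ℤ => exp (log (1 - c) * (√(I : ℝ) - 1))) +
        fun I : ℤ => (I : ℝ) ^ ((1 : ℝ) + (j : ℝ) / 2) * gam c j (⌊√(I : ℝ)⌋ - j)) ?_ ?_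
    · filter_upwards [eventually_gt_atTop 0] with I hI
      rw [gam_succ_of_pos c j hI, rpow_def_of_pos h1c]
      rfl
    · rw [hhalf]
      exact (hasStretchedExpBound_exp_mul_sqrt_sub_one hL.le (by positivity) (by linarith)).add
        (by positivity) (ih.rpow_mul_comp_floor_sqrt_sub hL hs hs1 _ j)

theorem cost_bubble_stmt9_general (c : ℝ) (hc : c ∈ Set.Ioo (0 : ℝ) 1) (k : ℕ) :
    (∀ ε > (0 : ℝ), ∀ᶠ I : ℕ in atTop,
      gam c (k - 1) (I : ℤ) ≤
        Real.exp ((Real.log (1 - c) + ε) * (I : ℝ) ^ ((1 : ℝ) / (2 : ℝ) ^ (k - 1)))) ∧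
    Real.log (1 - c) < 0 := by
  refine ⟨fun ε hε => ?_, log_neg (sub_pos.2 hc.2) (by linarith [hc.1])⟩
  filter_upwards [tendsto_natCast_atTop_atTop.eventually
    (hasStretchedExpBound_gam hc (k - 1) ε hε)] with I hI
  exact_mod_cast hI

/-- geometric decay of the resonance-avoidance bounds, (A.41):
for each `1 ≤ k ≤ J`, `limsup_{I→∞} I^{-1/2^{k-1}} log γ^{(J)}_{k,I} ≤ log(1-c) < 0`;
equivalently (since `γ ≥ 0`, and allowing `γ = 0`), for every `ε > 0`, eventually in `I`,
`γ^{(J)}_{k,I} ≤ exp((log(1-c)+ε) · I^{1/2^{k-1}})`. -/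
theorem cost_bubble_stmt9 (J : ℕ) (hJ : 1 ≤ J) (c : ℝ) (hc : c ∈ Set.Ioo (0 : ℝ) 1)
    (k : ℕ) (hk : 1 ≤ k) (hkJ : k ≤ J) :
    (∀ ε > (0 : ℝ), ∀ᶠ I : ℕ in atTop,
      gam c (k - 1) (I : ℤ) ≤
        Real.exp ((Real.log (1 - c) + ε) * (I : ℝ) ^ ((1 : ℝ) / (2 : ℝ) ^ (k - 1)))) ∧
    Real.log (1 - c) < 0 :=
  cost_bubble_stmt9_general c hc k

end
end
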